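/- (Baumslag) Let G be a finitely generated residually finite group. Then Aut(G) is residually finite. -/

import Mathlib

/-- A group is residually finite if every nontrivial element survives in some finite quotient. -/
def ResiduallyFinite (G : Type*) [Group G] : Prop :=
  ∀ g : G, g ≠ 1 → ∃ (F : Type) (_ : Group F) (_ : Finite F) (φ : G →* F), φ g ≠ 1

/-- A group is residually `p` if every nontrivial element survives in some finite `p`-group
quotient. -/
def ResiduallyP (p : ℕ) (G : Type*) [Group G] : Prop :=
  ∀ g : G, g ≠ 1 →
    ∃ (F : Type) (_ : Group F) (_ : Finite F) (φ : G →* F), IsPGroup p F ∧ φ g ≠ 1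

/-- A group is virtually residually `p` if some finite-index subgroup is residually `p`. -/
def VirtuallyResiduallyP (p : ℕ) (G : Type*) [Group G] : Prop :=
  ∃ K : Subgroup G, K.FiniteIndex ∧ ResiduallyP p ↥K

/-!
For a finite group `F`, the intersection `M_F` of the kernels of all homomorphisms `G →* F` is
characteristic, and it has finite index because a finitely generated `G` has only finitely many
homomorphisms to `F`. Hence `Aut G` acts on the finite group `G ⧸ M_F`. If `α g ≠ g`, residual
finiteness gives some `φ : G →* F` with `φ (α g / g) ≠ 1`, so `α g / g ∉ M_F` and `α` acts
nontrivially on `G ⧸ M_F`.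
-/

theorem ResiduallyFinite.of_forall_exists_finite {G : Type*} [Group G]
    (h : ∀ g : G, g ≠ 1 → ∃ (F : Type*) (_ : Group F) (_ : Finite F) (φ : G →* F), φ g ≠ 1) :
    ResiduallyFinite G := by
  intro g hg
  obtain ⟨F, _, _, φ, hφ⟩ := h g hg
  exact ⟨Shrink.{0} F, inferInstance, inferInstance,
    Shrink.mulEquiv.symm.toMonoidHom.comp φ, by simpa using hφ⟩

theorem MonoidHom.finite_of_fg (G F : Type*) [Group G] [Monoid F] [Finite F]
    (hfg : Group.FG G) : Finite (G →* F) := by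
  obtain ⟨S, hS, hSfin⟩ := Group.fg_iff.mp hfg
  have : Finite S := hSfin
  refine Finite.of_injective (fun f : G →* F => fun s : S => f s) fun f f' hff' => ?_
  exact MonoidHom.eq_of_eqOn_dense hS fun x hx => congrFun hff' ⟨x, hx⟩

namespace Subgroup

variable (G F : Type*) [Group G] [Group F]

def commonKernel : Subgroup G := ⨅ f : G →* F, f.ker

variable {G F}

theorem mem_commonKernel {x : G} : x ∈ commonKernel G F ↔ ∀ f : G →* F, f x = 1 := by
  simp only [commonKernel, mem_iInf, MonoidHom.mem_ker]

instance commonKernel_characteristic : (commonKernel G F).Characteristic :=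
  characteristic_iff_le_comap.mpr fun β _ hx =>
    mem_commonKernel.mpr fun f => mem_commonKernel.mp hx (f.comp β.toMonoidHom)

theorem commonKernel_finiteIndex [Finite F] (hfg : Group.FG G) :
    (commonKernel G F).FiniteIndex :=
  have := MonoidHom.finite_of_fg G F hfg
  finiteIndex_iInf fun f => finiteIndex_ker f

end Subgroup

namespace MulAut

variable {G : Type*} [Group G] (N : Subgroup G) [N.Characteristic]

def quotient : MulAut G →* MulAut (G ⧸ N) where
  toFun α := QuotientGroup.congr N N α (Subgroup.characteristic_iff_map_eq.mp inferInstance α)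
  map_one' := by
    ext x
    induction x using QuotientGroup.induction_on
    rfl
  map_mul' α β := by
    ext x
    induction x using QuotientGroup.induction_on
    rfl

theorem quotient_apply_mk (α : MulAut G) (g : G) : quotient N α g = (α g : G ⧸ N) := rfl

theorem div_mem_of_quotient_eq_one {α : MulAut G} (h : quotient N α = 1) (g : G) :
    α g / g ∈ N := by
  rw [← QuotientGroup.eq_iff_div_mem, ← quotient_apply_mk, h]
  rfl

end MulAut

/-- **Baumslag.** The automorphism group of a finitely generated residually finite
group is residually finite. -/
theorem statement5 (G : Type*) [Group G] (hfg : Group.FG G) (hrf : ResiduallyFinite G) :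
    ResiduallyFinite (MulAut G) := by
  refine ResiduallyFinite.of_forall_exists_finite fun α hα => ?_
  obtain ⟨g, hg⟩ : ∃ g, α g ≠ g := by
    by_contra! h
    exact hα (MulEquiv.ext h)
  obtain ⟨F, _, _, φ, hφ⟩ := hrf (α g / g) (div_ne_one.mpr hg)
  have := Subgroup.commonKernel_finiteIndex (F := F) hfg
  refine ⟨MulAut (G ⧸ Subgroup.commonKernel G F), _, inferInstance,
    MulAut.quotient _, fun h => hφ ?_⟩
  exact Subgroup.mem_commonKernel.mp (MulAut.div_mem_of_quotient_eq_one _ h g) φ
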